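/- Let ω ∈ [0,1], A ∈ C^{m×m}, D ∈ C^{n×n}, and let Ã ∈ R^{m×m}, D̃ ∈ R^{n×n} be Z-matrices (nonpositive off-diagonal entries) with Ã ≤ A_ω and D̃ ≤ D_ω entrywise. If the Kronecker sum D̃ᵀ⊗I_m + I_n⊗Ã is a nonsingular M-matrix, then Dᵀ⊗I_m + I_n⊗A is nonsingular and |(Dᵀ⊗I_m + I_n⊗A)⁻¹| ≤ (D̃ᵀ⊗I_m + I_n⊗Ã)⁻¹ entrywise. -/

import Mathlib

/-!
With `K := Dᵀ⊗I + I⊗A` and `M := D̃ᵀ⊗I + I⊗Ã`: taking ω-comparison matrices commutes with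
Kronecker sums, and `ω·Re z + (1-ω)·Im z ≤ |z|`, so `M` lies entrywise below the Ostrowski
comparison matrix of `K`. By the reverse triangle inequality `M|x| ≤ |Kx|`, and inverse positivity
of the M-matrix `M` turns this into `|x| ≤ M⁻¹|Kx|`. Hence `K` is injective, and applying the bound
to the columns of `K⁻¹` gives `|K⁻¹| ≤ M⁻¹`.
-/

open Matrix Filter Kronecker

noncomputable section

/-- The ω-weighted linear functional `z ↦ ω·Re z + (1-ω)·Im z`. -/
def wlin (ω : ℝ) (z : ℂ) : ℝ := ω * z.re + (1 - ω) * z.im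

/-- The ω-comparison matrix of a complex square matrix. -/
def omegaComp {N : Type*} [DecidableEq N] (ω : ℝ) (B : Matrix N N ℂ) : Matrix N N ℝ :=
  Matrix.of fun i j => if i = j then wlin ω (B i i) else -‖B i j‖

/-- A real square matrix is a nonsingular M-matrix: nonpositive off-diagonal entries and
`M *ᵥ u > 0` entrywise for some entrywise positive `u`. -/
def IsNonsingMMatrix {N : Type*} [Fintype N] (M : Matrix N N ℝ) : Prop :=
  (∀ i j, i ≠ j → M i j ≤ 0) ∧ ∃ u : N → ℝ, (∀ i, 0 < u i) ∧ ∀ i, 0 < (M *ᵥ u) i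

/-- Entrywise absolute value of a complex matrix. -/
def cabs {α β : Type*} (M : Matrix α β ℂ) : Matrix α β ℝ :=
  Matrix.of fun i j => ‖M i j‖


namespace IsNonsingMMatrix

variable {N : Type*} [Fintype N] {M : Matrix N N ℝ}

/-- Inverse positivity: compare `w` with the largest multiple `t • u` lying below it; if `t < 0`,
row `k` of `M (w - t • u)` would be both positive and, by the sign pattern of `M`, nonpositive. -/
theorem nonneg_of_mulVec_nonneg (hM : IsNonsingMMatrix M) {w : N → ℝ} (hw : 0 ≤ M *ᵥ w) :
    0 ≤ w := by
  obtain ⟨hZ, u, hu, hMu⟩ := hM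
  intro i
  obtain ⟨k, -, hk⟩ := Finset.exists_min_image Finset.univ (fun j => w j / u j) ⟨i, by simp⟩
  set t := w k / u k
  have hwu : ∀ j, t * u j ≤ w j := fun j => (le_div_iff₀ (hu j)).1 (hk j (Finset.mem_univ j))
  suffices ht : 0 ≤ t from (mul_nonneg ht (hu i).le).trans (hwu i)
  by_contra! ht
  have hvk : w k - t * u k = 0 := by simp [t, div_mul_cancel₀ _ (hu k).ne']
  have hpos : 0 < (M *ᵥ (w - t • u)) k := by
    have hwk : 0 ≤ (M *ᵥ w) k := hw k
    rw [mulVec_sub, mulVec_smul, Pi.sub_apply, Pi.smul_apply, smul_eq_mul]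
    nlinarith [hMu k]
  have hnonpos : (M *ᵥ (w - t • u)) k ≤ 0 := by
    simp only [mulVec, dotProduct, Pi.sub_apply, Pi.smul_apply, smul_eq_mul]
    refine Finset.sum_nonpos fun j _ => ?_
    rcases eq_or_ne k j with rfl | hkj
    · simp [hvk]
    · exact mul_nonpos_of_nonpos_of_nonneg (hZ k j hkj) (sub_nonneg.2 (hwu j))
  linarith

theorem det_ne_zero [DecidableEq N] (hM : IsNonsingMMatrix M) : M.det ≠ 0 := by
  intro hdet
  obtain ⟨v, hv0, hv⟩ := exists_mulVec_eq_zero_iff.2 hdet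
  have hv_nonneg := hM.nonneg_of_mulVec_nonneg (w := v) (by rw [hv])
  have hv_nonpos := hM.nonneg_of_mulVec_nonneg (w := -v) (by rw [mulVec_neg, hv, neg_zero])
  exact hv0 (le_antisymm (neg_nonneg.1 hv_nonpos) hv_nonneg)

end IsNonsingMMatrix

section Comparison

variable {N : Type*} [Fintype N] {M : Matrix N N ℝ} {K : Matrix N N ℂ}

theorem mulVec_norm_le_norm_mulVec (hdiag : ∀ i, M i i ≤ ‖K i i‖)
    (hoff : ∀ i j, i ≠ j → M i j ≤ -‖K i j‖) (x : N → ℂ) (i : N) :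
    (M *ᵥ fun j => ‖x j‖) i ≤ ‖(K *ᵥ x) i‖ := by
  classical
  set S := ∑ j ∈ Finset.univ.erase i, K i j * x j
  have hK : (K *ᵥ x) i = K i i * x i + S := by
    simp only [mulVec, dotProduct, S]
    rw [← Finset.add_sum_erase _ _ (Finset.mem_univ i)]
  have hM : (M *ᵥ fun j => ‖x j‖) i = M i i * ‖x i‖ + ∑ j ∈ Finset.univ.erase i, M i j * ‖x j‖ := by
    simp only [mulVec, dotProduct]
    rw [← Finset.add_sum_erase _ _ (Finset.mem_univ i)]
  have hS : ‖S‖ ≤ ∑ j ∈ Finset.univ.erase i, ‖K i j‖ * ‖x j‖ :=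
    (norm_sum_le _ _).trans_eq (Finset.sum_congr rfl fun j _ => norm_mul _ _)
  have hoffsum : ∑ j ∈ Finset.univ.erase i, M i j * ‖x j‖
      ≤ -∑ j ∈ Finset.univ.erase i, ‖K i j‖ * ‖x j‖ := by
    rw [← Finset.sum_neg_distrib]
    refine Finset.sum_le_sum fun j hj => ?_
    rw [← neg_mul]
    exact mul_le_mul_of_nonneg_right (hoff i j (Finset.ne_of_mem_erase hj).symm) (norm_nonneg _)
  have hdiagterm : M i i * ‖x i‖ ≤ ‖K i i * x i‖ := by
    rw [norm_mul]
    exact mul_le_mul_of_nonneg_right (hdiag i) (norm_nonneg _)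
  have htri : ‖K i i * x i‖ - ‖S‖ ≤ ‖(K *ᵥ x) i‖ := by
    have := norm_sub_le (K i i * x i + S) S
    rw [add_sub_cancel_right] at this
    rw [hK]
    linarith
  linarith

variable [DecidableEq N]

theorem IsNonsingMMatrix.norm_le_inv_mulVec_norm_mulVec (hM : IsNonsingMMatrix M)
    (hdiag : ∀ i, M i i ≤ ‖K i i‖) (hoff : ∀ i j, i ≠ j → M i j ≤ -‖K i j‖) (x : N → ℂ) :
    (fun j => ‖x j‖) ≤ M⁻¹ *ᵥ fun j => ‖(K *ᵥ x) j‖ := by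
  rw [← sub_nonneg]
  apply hM.nonneg_of_mulVec_nonneg
  intro i
  rw [mulVec_sub, mulVec_mulVec, mul_nonsing_inv M (isUnit_iff_ne_zero.2 hM.det_ne_zero),
    one_mulVec]
  simpa using mulVec_norm_le_norm_mulVec hdiag hoff x i

/-- Ostrowski's comparison theorem. -/
theorem IsNonsingMMatrix.isUnit_det_and_norm_inv_le (hM : IsNonsingMMatrix M)
    (hdiag : ∀ i, M i i ≤ ‖K i i‖) (hoff : ∀ i j, i ≠ j → M i j ≤ -‖K i j‖) :
    IsUnit K.det ∧ ∀ p q, ‖K⁻¹ p q‖ ≤ M⁻¹ p q := by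
  have hbound := hM.norm_le_inv_mulVec_norm_mulVec hdiag hoff
  have hK : IsUnit K.det := by
    refine isUnit_iff_ne_zero.2 fun hdet => ?_
    obtain ⟨v, hv0, hv⟩ := exists_mulVec_eq_zero_iff.2 hdet
    have hKv : (fun j => ‖(K *ᵥ v) j‖) = 0 := by
      ext j
      simp [hv]
    refine hv0 (funext fun j => ?_)
    simpa [hKv] using hbound v j
  refine ⟨hK, fun p q => ?_⟩
  have hcol : K *ᵥ (K⁻¹ *ᵥ Pi.single q 1) = Pi.single q 1 := by
    rw [mulVec_mulVec, mul_nonsing_inv K hK, one_mulVec]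
  have hnorm : (fun j => ‖(Pi.single q (1 : ℂ) : N → ℂ) j‖) = Pi.single q (1 : ℝ) := by
    ext j
    rcases eq_or_ne j q with rfl | hjq <;> simp [*]
  have hentry := hbound (K⁻¹ *ᵥ Pi.single q 1) p
  rw [hcol, hnorm] at hentry
  simpa [mulVec_single] using hentry

end Comparison

theorem wlin_le_norm {ω : ℝ} (hω : ω ∈ Set.Icc (0 : ℝ) 1) (z : ℂ) : wlin ω z ≤ ‖z‖ := by
  obtain ⟨h0, h1⟩ := hω
  have hre := Complex.re_le_norm z
  have him := Complex.im_le_norm z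
  unfold wlin
  nlinarith

theorem omegaComp_diag_le_norm {N : Type*} [DecidableEq N] {ω : ℝ} (hω : ω ∈ Set.Icc (0 : ℝ) 1)
    (B : Matrix N N ℂ) (i : N) : omegaComp ω B i i ≤ ‖B i i‖ := by
  simpa [omegaComp] using wlin_le_norm hω (B i i)

theorem omegaComp_of_ne {N : Type*} [DecidableEq N] (ω : ℝ) (B : Matrix N N ℂ) {i j : N}
    (hij : i ≠ j) : omegaComp ω B i j = -‖B i j‖ := by
  simp [omegaComp, hij]

/-- `wlin ω` is additive, and the two Kronecker summands have disjoint off-diagonal supports. -/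
theorem omegaComp_kroneckerSum {ι κ : Type*} [DecidableEq ι] [DecidableEq κ] (ω : ℝ)
    (A : Matrix κ κ ℂ) (D : Matrix ι ι ℂ) :
    omegaComp ω (Dᵀ ⊗ₖ (1 : Matrix κ κ ℂ) + (1 : Matrix ι ι ℂ) ⊗ₖ A) =
      (omegaComp ω D)ᵀ ⊗ₖ (1 : Matrix κ κ ℝ) + (1 : Matrix ι ι ℝ) ⊗ₖ omegaComp ω A := by
  ext ⟨i, k⟩ ⟨j, l⟩
  simp only [omegaComp, of_apply, Matrix.add_apply, kroneckerMap_apply, transpose_apply, one_apply,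
    Prod.mk.injEq]
  by_cases hij : i = j <;> by_cases hkl : k = l
  · simp only [hij, hkl, and_self, if_true, wlin, Complex.add_re, Complex.add_im, mul_one,
      one_mul]
    ring
  all_goals simp [hij, hkl, eq_comm]

theorem kroneckerSum_le_kroneckerSum {ι κ : Type*} [DecidableEq ι] [DecidableEq κ]
    {A A' : Matrix κ κ ℝ} {D D' : Matrix ι ι ℝ} (hA : ∀ i j, A i j ≤ A' i j)
    (hD : ∀ i j, D i j ≤ D' i j) (p q : ι × κ) :
    (Dᵀ ⊗ₖ (1 : Matrix κ κ ℝ) + (1 : Matrix ι ι ℝ) ⊗ₖ A) p q ≤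
      (D'ᵀ ⊗ₖ (1 : Matrix κ κ ℝ) + (1 : Matrix ι ι ℝ) ⊗ₖ A') p q := by
  simp only [Matrix.add_apply, kroneckerMap_apply, transpose_apply]
  gcongr
  · exact zero_le_one_elem _ _
  · exact hD _ _
  · exact zero_le_one_elem _ _
  · exact hA _ _

theorem stmt2_general {m n : ℕ} (ω : ℝ) (hω : ω ∈ Set.Icc (0 : ℝ) 1)
    (A : Matrix (Fin m) (Fin m) ℂ) (D : Matrix (Fin n) (Fin n) ℂ)
    (At : Matrix (Fin m) (Fin m) ℝ) (Dt : Matrix (Fin n) (Fin n) ℝ)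
    (hAle : ∀ i j, At i j ≤ omegaComp ω A i j)
    (hDle : ∀ i j, Dt i j ≤ omegaComp ω D i j)
    (hM : IsNonsingMMatrix
      (Dtᵀ ⊗ₖ (1 : Matrix (Fin m) (Fin m) ℝ) + (1 : Matrix (Fin n) (Fin n) ℝ) ⊗ₖ At)) :
    IsUnit (Dᵀ ⊗ₖ (1 : Matrix (Fin m) (Fin m) ℂ) +
        (1 : Matrix (Fin n) (Fin n) ℂ) ⊗ₖ A).det ∧
    ∀ p q, ‖(Dᵀ ⊗ₖ (1 : Matrix (Fin m) (Fin m) ℂ) +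
        (1 : Matrix (Fin n) (Fin n) ℂ) ⊗ₖ A)⁻¹ p q‖ ≤
      (Dtᵀ ⊗ₖ (1 : Matrix (Fin m) (Fin m) ℝ) +
        (1 : Matrix (Fin n) (Fin n) ℝ) ⊗ₖ At)⁻¹ p q := by
  set K := Dᵀ ⊗ₖ (1 : Matrix (Fin m) (Fin m) ℂ) + (1 : Matrix (Fin n) (Fin n) ℂ) ⊗ₖ A
  have hle : ∀ p q, (Dtᵀ ⊗ₖ (1 : Matrix (Fin m) (Fin m) ℝ) +
      (1 : Matrix (Fin n) (Fin n) ℝ) ⊗ₖ At) p q ≤ omegaComp ω K p q := by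
    intro p q
    rw [omegaComp_kroneckerSum]
    exact kroneckerSum_le_kroneckerSum hAle hDle p q
  refine hM.isUnit_det_and_norm_inv_le (fun p => ?_) (fun p q hpq => ?_)
  · exact (hle p p).trans (omegaComp_diag_le_norm hω K p)
  · exact (hle p q).trans_eq (omegaComp_of_ne ω K hpq)

/-- If `Ã ≤ A_ω`, `D̃ ≤ D_ω` are Z-matrices and the Kronecker sum
`D̃ᵀ⊗I + I⊗Ã` is a nonsingular M-matrix, then `Dᵀ⊗I + I⊗A` is nonsingular and its inverse is
entrywise dominated by `(D̃ᵀ⊗I + I⊗Ã)⁻¹`. -/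
theorem stmt2 {m n : ℕ} (ω : ℝ) (hω : ω ∈ Set.Icc (0 : ℝ) 1)
    (A : Matrix (Fin m) (Fin m) ℂ) (D : Matrix (Fin n) (Fin n) ℂ)
    (At : Matrix (Fin m) (Fin m) ℝ) (Dt : Matrix (Fin n) (Fin n) ℝ)
    (hAZ : ∀ i j, i ≠ j → At i j ≤ 0) (hDZ : ∀ i j, i ≠ j → Dt i j ≤ 0)
    (hAle : ∀ i j, At i j ≤ omegaComp ω A i j)
    (hDle : ∀ i j, Dt i j ≤ omegaComp ω D i j)
    (hM : IsNonsingMMatrix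
      (Dtᵀ ⊗ₖ (1 : Matrix (Fin m) (Fin m) ℝ) + (1 : Matrix (Fin n) (Fin n) ℝ) ⊗ₖ At)) :
    IsUnit (Dᵀ ⊗ₖ (1 : Matrix (Fin m) (Fin m) ℂ) +
        (1 : Matrix (Fin n) (Fin n) ℂ) ⊗ₖ A).det ∧
    ∀ p q, ‖(Dᵀ ⊗ₖ (1 : Matrix (Fin m) (Fin m) ℂ) +
        (1 : Matrix (Fin n) (Fin n) ℂ) ⊗ₖ A)⁻¹ p q‖ ≤
      (Dtᵀ ⊗ₖ (1 : Matrix (Fin m) (Fin m) ℝ) +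
        (1 : Matrix (Fin n) (Fin n) ℝ) ⊗ₖ At)⁻¹ p q :=
  stmt2_general ω hω A D At Dt hAle hDle hM
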